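/- arXiv:1201.0989 — 2 statements merged into one kernel-verified Lean document; each statement's English description precedes it below -/
import Mathlib

section
/- Folding Lemma. Let γ_1, γ_2: [0,∞) → X be combinatorial geodesic rays in a CAT(0) cube complex X with γ_1(0) = γ_2(0), and suppose some hyperplane H crosses both γ_1 and γ_2, being dual to γ_1([s,s+1]) and to γ_2([t,t+1]) with 0 ≤ s ≤ t. Then there exist combinatorial geodesic rays γ'_1, γ'_2: [0,∞) → X such that γ_1([s+1,∞)) ⊆ γ'_1, γ_2([t+1,∞)) ⊆ γ'_2, and γ'_1 and γ'_2 coincide along an initial geodesic segment P whose initial 0-cube is γ_1(0) and whose terminal 1-cube is dual to H. -/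
/-!
Combinatorial model of a CAT(0) cube complex via Sageev duality.

`V` is the set of 0-cubes, `H` the set of hyperplanes, and `side h x : Bool`
records which halfspace of the hyperplane `h` contains the 0-cube `x`.
The axioms say exactly that `V` is the set of consistent orientations of the
hyperplanes, each differing from a fixed one on finitely many hyperplanes;
this is precisely the combinatorial data of (the 0-skeleton of) a CAT(0) cube
complex, together with its hyperplane structure.
-/
structure CCC where
  V : Type
  H : Type
  side : H → V → Bool
  nonempty_V : Nonempty V
  vertex_ext : ∀ x y : V, (∀ h, side h x = side h y) → x = y
  sep_finite : ∀ x y : V, {h : H | side h x ≠ side h y}.Finite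
  halfspace_nonempty : ∀ h b, ∃ x, side h x = b
  hyp_inj : ∀ h h' : H, (∀ x, side h x = side h' x) → h = h'
  hyp_inj' : ∀ h h' : H, (∀ x, side h x = !(side h' x)) → h = h'
  realize : ∀ (o : H → Bool) (x : V),
    (∀ h h', ∃ y, side h y = o h ∧ side h' y = o h') →
    {h : H | o h ≠ side h x}.Finite →
    ∃ y, ∀ h, side h y = o h

namespace CCC

variable (X : CCC)

/-- The combinatorial (1-skeleton) distance between 0-cubes: the number of
separating hyperplanes. -/
noncomputable def dist (x y : X.V) : ℕ := (X.sep_finite x y).toFinset.card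

/-- Two 0-cubes are adjacent (joined by a 1-cube) iff exactly one hyperplane
separates them. -/
def Adj (x y : X.V) : Prop :=
  ∃ h, X.side h x ≠ X.side h y ∧ ∀ h', X.side h' x ≠ X.side h' y → h' = h

/-- Two hyperplanes cross iff all four quarter-spaces are nonempty. -/
def Crosses (h h' : X.H) : Prop :=
  ∀ b b' : Bool, ∃ x, X.side h x = b ∧ X.side h' x = b'

/-- The hyperplane `h'` lies in the halfspace `b` of the hyperplane `h`. -/
def InHalf (h' h : X.H) (b : Bool) : Prop :=
  h' ≠ h ∧ ∃ c : Bool, ∀ x, X.side h x = !b → X.side h' x = c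

/-- `h` separates the hyperplanes `h₁` and `h₂`. -/
def SepH (h h₁ h₂ : X.H) : Prop :=
  ∃ b : Bool, X.InHalf h₁ h b ∧ X.InHalf h₂ h (!b)

/-- Two distinct hyperplanes contact iff no third hyperplane separates them. -/
def Contact (h h' : X.H) : Prop := h ≠ h' ∧ ¬ ∃ h'', X.SepH h'' h h'

/-- A facing triple: three distinct hyperplanes, each having a halfspace
containing the other two. -/
def FacingTriple (h₁ h₂ h₃ : X.H) : Prop :=
  h₁ ≠ h₂ ∧ h₁ ≠ h₃ ∧ h₂ ≠ h₃ ∧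
  ∃ b₁ b₂ b₃ : Bool,
    X.InHalf h₂ h₁ b₁ ∧ X.InHalf h₃ h₁ b₁ ∧
    X.InHalf h₁ h₂ b₂ ∧ X.InHalf h₃ h₂ b₂ ∧
    X.InHalf h₁ h₃ b₃ ∧ X.InHalf h₂ h₃ b₃

/-- A set of hyperplanes is inseparable if every hyperplane separating two of
its members belongs to it. -/
def Inseparable (U : Set X.H) : Prop :=
  ∀ u ∈ U, ∀ u' ∈ U, ∀ h, X.SepH h u u' → h ∈ U

/-- A set of hyperplanes is unidirectional if each member has a halfspace
containing only finitely many members. -/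
def Unidirectional (U : Set X.H) : Prop :=
  ∀ u ∈ U, ∃ b : Bool, {h | h ∈ U ∧ X.InHalf h u b}.Finite

def NoFacingTriple (U : Set X.H) : Prop :=
  ∀ h₁ ∈ U, ∀ h₂ ∈ U, ∀ h₃ ∈ U, ¬ X.FacingTriple h₁ h₂ h₃

/-- A unidirectional boundary set (UBS). -/
def IsUBS (U : Set X.H) : Prop :=
  U.Infinite ∧ X.Inseparable U ∧ X.Unidirectional U ∧ X.NoFacingTriple U

/-- Almost-equivalence: finite symmetric difference. -/
def AlmostEq (U U' : Set X.H) : Prop := (symmDiff U U').Finite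

/-- A minimal UBS. -/
def MinUBS (U : Set X.H) : Prop :=
  X.IsUBS U ∧ ∀ U' ⊆ U, X.IsUBS U' → X.AlmostEq U U'

/-- The simplex (= almost-equivalence class of UBSs) represented by `U` is a
face of the simplex represented by `V`. -/
def FaceOf (U V : Set X.H) : Prop :=
  ∃ U' V', X.IsUBS U' ∧ X.IsUBS V' ∧ X.AlmostEq U U' ∧ X.AlmostEq V V' ∧ U' ⊆ V'

/-- `U` decomposes, up to almost-equivalence, into `k` pairwise disjoint
minimal UBSs; i.e. the class of `U` is a `(k-1)`-simplex of `∂X`. -/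
def HasDim (U : Set X.H) (k : ℕ) : Prop :=
  ∃ 𝒰 : Fin k → Set X.H, (∀ i, X.MinUBS (𝒰 i)) ∧
    (∀ i j, i ≠ j → Disjoint (𝒰 i) (𝒰 j)) ∧ X.AlmostEq U (⋃ i, 𝒰 i)

/-- No infinite family of pairwise-crossing hyperplanes. -/
def NoInfiniteCrossing : Prop :=
  ∀ S : Set X.H, (∀ h ∈ S, ∀ h' ∈ S, h ≠ h' → X.Crosses h h') → S.Finite

def LocallyFinite : Prop := ∀ x : X.V, {y | X.Adj x y}.Finite

/-- A combinatorial geodesic ray (parameterized by its vertices). -/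
def IsGeodesicRay (γ : ℕ → X.V) : Prop :=
  ∀ m n : ℕ, m ≤ n → X.dist (γ m) (γ n) = n - m

/-- A bi-infinite combinatorial geodesic. -/
def IsGeodesicLine (α : ℤ → X.V) : Prop :=
  ∀ m n : ℤ, m ≤ n → (X.dist (α m) (α n) : ℤ) = n - m

/-- A combinatorial geodesic segment of length `n`. -/
def IsGeodSeg (c : ℕ → X.V) (n : ℕ) : Prop :=
  ∀ i j : ℕ, i ≤ j → j ≤ n → X.dist (c i) (c j) = j - i

/-- The set of hyperplanes crossing (dual to the 1-cubes of) the path `γ`. -/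
def WSet (γ : ℕ → X.V) : Set X.H :=
  {h | ∃ n : ℕ, X.side h (γ n) ≠ X.side h (γ (n+1))}

/-- The 0-cubes of the carrier `N(h)` of the hyperplane `h`. -/
def carrier (h : X.H) : Set X.V :=
  {x | ∃ y, X.Adj x y ∧ X.side h x ≠ X.side h y}

/-- An essential hyperplane: each halfspace contains 0-cubes arbitrarily far
from the carrier. -/
def EssentialHyp (h : X.H) : Prop :=
  ∀ b : Bool, ∀ n : ℕ, ∃ x, X.side h x = b ∧ ∀ y ∈ X.carrier h, n ≤ X.dist x y

/-- Combinatorial convexity of a set of 0-cubes (the 0-skeleton of a convex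
subcomplex). -/
def IsConvexSet (S : Set X.V) : Prop :=
  ∀ x ∈ S, ∀ y ∈ S, ∀ z, X.dist x z + X.dist z y = X.dist x y → z ∈ S

/-- `x` and `y` are joined by a combinatorial path avoiding `S`. -/
def ReachAvoid (S : Set X.V) (x y : X.V) : Prop :=
  ∃ (n : ℕ) (c : ℕ → X.V), c 0 = x ∧ c n = y ∧
    (∀ i < n, X.Adj (c i) (c (i+1))) ∧ ∀ i ≤ n, c i ∉ S

/-- No compact (finite) convex subcomplex disconnects `X`. -/
def CompactlyIndecomposable : Prop :=
  ∀ K : Set X.V, K.Finite → X.IsConvexSet K →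
    ∀ x y : X.V, x ∉ K → y ∉ K → X.ReachAvoid K x y

/-- `γ` bounds an eighth-flat: some eighth-flat (the subcomplex of the standard
tiling of `[0,∞)²` below the graph of an unbounded nondecreasing function)
embeds isometrically and cubically in `X` with image containing `γ`. -/
def BoundsEighthFlat (γ : ℕ → X.V) : Prop :=
  ∃ g : ℕ → ℕ, Monotone g ∧ (∀ N : ℕ, ∃ m, N ≤ g m) ∧
    ∃ e : {p : ℕ × ℕ // p.2 ≤ g p.1} → X.V,
      (∀ p q, X.dist (e p) (e q) = Nat.dist p.1.1 q.1.1 + Nat.dist p.1.2 q.1.2) ∧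
      ∀ n : ℕ, ∃ p, e p = γ n

/-- An edge-chain in the contact graph. -/
def CChain (c : ℕ → X.H) (n : ℕ) : Prop := ∀ i < n, X.Contact (c i) (c (i+1))

/-- Distance in the contact graph `C(X)` (`⊤` if there is no path). -/
noncomputable def cdist (h h' : X.H) : ℕ∞ :=
  sInf {e : ℕ∞ | ∃ (n : ℕ) (c : ℕ → X.H), c 0 = h ∧ c n = h' ∧ X.CChain c n ∧ e = n}

/-- An edge-chain in the crossing graph. -/
def XChain (c : ℕ → X.H) (n : ℕ) : Prop := ∀ i < n, X.Crosses (c i) (c (i+1))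

/-- Distance in the crossing graph `Δ(X)`. -/
noncomputable def xdist (h h' : X.H) : ℕ∞ :=
  sInf {e : ℕ∞ | ∃ (n : ℕ) (c : ℕ → X.H), c 0 = h ∧ c n = h' ∧ X.XChain c n ∧ e = n}

/-- Distance in the full subgraph `Λ(γ)` of the contact graph spanned by the
hyperplanes crossing `γ`. -/
noncomputable def ldist (γ : ℕ → X.V) (h h' : X.H) : ℕ∞ :=
  sInf {e : ℕ∞ | ∃ (n : ℕ) (c : ℕ → X.H), c 0 = h ∧ c n = h' ∧
    (∀ i ≤ n, c i ∈ X.WSet γ) ∧ X.CChain c n ∧ e = n}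

/-- Two 0-simplices of `∂X` (represented by minimal UBSs) are adjacent in the
1-skeleton of `∂X`. -/
def BAdj (U V : Set X.H) : Prop :=
  X.MinUBS U ∧ X.MinUBS V ∧ ¬ X.AlmostEq U V ∧
    ∃ W, X.IsUBS W ∧ X.FaceOf U W ∧ X.FaceOf V W

/-- Distance in the 1-skeleton of the simplicial boundary `∂X`, between the
0-simplices represented by the minimal UBSs `U` and `V`. -/
noncomputable def bdist (U V : Set X.H) : ℕ∞ :=
  sInf {e : ℕ∞ | ∃ (n : ℕ) (c : ℕ → Set X.H),
    X.AlmostEq (c 0) U ∧ X.AlmostEq (c n) V ∧ (∀ i ≤ n, X.MinUBS (c i)) ∧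
    (∀ i < n, X.BAdj (c i) (c (i+1)) ∨ X.AlmostEq (c i) (c (i+1))) ∧ e = n}

/-- Diameter of the contact graph. -/
noncomputable def cdiam : ℕ∞ := ⨆ (h : X.H) (h' : X.H), X.cdist h h'

/-- Diameter of the crossing graph. -/
noncomputable def xdiam : ℕ∞ := ⨆ (h : X.H) (h' : X.H), X.xdist h h'

/-- Diameter of the 1-skeleton of the simplicial boundary. -/
noncomputable def bdiam : ℕ∞ :=
  ⨆ (U : Set X.H) (V : Set X.H) (_ : X.MinUBS U) (_ : X.MinUBS V), X.bdist U V

/-- A consistent orientation of the hyperplanes: any two chosen halfspaces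
intersect. -/
def Consistent (χ : X.H → Bool) : Prop :=
  ∀ h h', ∃ x, X.side h x = χ h ∧ X.side h' x = χ h'

/-- The halfspace `b` of `h`, as a set of 0-cubes. -/
def Hs (h : X.H) (b : Bool) : Set X.V := {x | X.side h x = b}

/-- Every simplex of `∂X` is visible, i.e. represented by the set of
hyperplanes crossing some combinatorial geodesic ray. -/
def FullyVisible : Prop :=
  ∀ V, X.IsUBS V → ∃ γ : ℕ → X.V, X.IsGeodesicRay γ ∧ X.AlmostEq (X.WSet γ) V

/-- The halfspace `b` of `h` is shallow: it lies within uniformly bounded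
distance of the carrier of `h`. -/
def ShallowHalf (h : X.H) (b : Bool) : Prop :=
  ∃ R : ℕ, ∀ x, X.side h x = b → ∃ y ∈ X.carrier h, X.dist x y ≤ R

/-- An `r`-avoiding combinatorial path (with respect to the basepoint `x₀`)
of length `n` from `a` to `b`. -/
def AvoidPathLen (x₀ : X.V) (r : ℕ) (a b : X.V) (n : ℕ) : Prop :=
  ∃ c : ℕ → X.V, c 0 = a ∧ c n = b ∧
    (∀ i < n, X.Adj (c i) (c (i+1))) ∧ ∀ i ≤ n, r ≤ X.dist (c i) x₀

/-- Combinatorial geodesic completeness: for every (finite) maximal family of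
pairwise-crossing hyperplanes and every choice of halfspaces, the intersection
of the chosen halfspaces contains 0-cubes arbitrarily far from the
intersection of the carriers. -/
def CombGeodComplete : Prop :=
  ∀ (n : ℕ) (W : Fin n → X.H), Function.Injective W →
    (∀ i j, i ≠ j → X.Crosses (W i) (W j)) →
    (∀ h, ¬ ∀ i, X.Crosses h (W i)) →
    ∀ χ : Fin n → Bool, ∀ R : ℕ,
      ∃ x, (∀ i, X.side (W i) x = χ i) ∧
        ∀ y, (∀ i, y ∈ X.carrier (W i)) → R ≤ X.dist x y

/-- `X` decomposes as a product of two unbounded convex subcomplexes: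
equivalently, the hyperplanes split into two parts, each member of one part
crossing each member of the other, both factors being unbounded. -/
def ProductDecomp : Prop :=
  ∃ H₁ H₂ : Set X.H, Disjoint H₁ H₂ ∧ H₁ ∪ H₂ = Set.univ ∧
    (∀ h₁ ∈ H₁, ∀ h₂ ∈ H₂, X.Crosses h₁ h₂) ∧
    (∀ n : ℕ, ∃ x y : X.V, n ≤ ({h | X.side h x ≠ X.side h y} ∩ H₁).ncard) ∧
    (∀ n : ℕ, ∃ x y : X.V, n ≤ ({h | X.side h x ≠ X.side h y} ∩ H₂).ncard)

/-- `∂X` decomposes as the simplicial join of two disjoint nonempty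
subcomplexes: the 0-simplices split into two nonempty parts, any 0-simplex of
one part spanning a 1-simplex with any 0-simplex of the other. -/
def JoinDecomp : Prop :=
  ∃ 𝒜₁ 𝒜₂ : Set (Set X.H),
    (∀ U ∈ 𝒜₁, X.MinUBS U) ∧ (∀ U ∈ 𝒜₂, X.MinUBS U) ∧
    𝒜₁.Nonempty ∧ 𝒜₂.Nonempty ∧
    (∀ U U', U ∈ 𝒜₁ → X.MinUBS U' → X.AlmostEq U U' → U' ∈ 𝒜₁) ∧
    (∀ U U', U ∈ 𝒜₂ → X.MinUBS U' → X.AlmostEq U U' → U' ∈ 𝒜₂) ∧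
    (∀ U, X.MinUBS U → U ∈ 𝒜₁ ∨ U ∈ 𝒜₂) ∧
    (∀ U ∈ 𝒜₁, ∀ V ∈ 𝒜₂, ¬ X.AlmostEq U V) ∧
    (∀ U ∈ 𝒜₁, ∀ V ∈ 𝒜₂, ∃ W, X.IsUBS W ∧ X.FaceOf U W ∧ X.FaceOf V W)

/-! Relative versions of the hyperplane notions, for a (convex) subcomplex
with 0-cube set `S`; the hyperplanes of the subcomplex are the hyperplanes of
`X` crossing it. -/

/-- `h` crosses the subcomplex with 0-cubes `S`. -/
def CrossesSet (S : Set X.V) (h : X.H) : Prop :=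
  ∃ x ∈ S, ∃ y ∈ S, X.side h x ≠ X.side h y

def InHalfOn (S : Set X.V) (h' h : X.H) (b : Bool) : Prop :=
  h' ≠ h ∧ ∃ c : Bool, ∀ x ∈ S, X.side h x = !b → X.side h' x = c

def SepHOn (S : Set X.V) (h h₁ h₂ : X.H) : Prop :=
  X.CrossesSet S h ∧ ∃ b : Bool, X.InHalfOn S h₁ h b ∧ X.InHalfOn S h₂ h (!b)

def InseparableOn (S : Set X.V) (U : Set X.H) : Prop :=
  ∀ u ∈ U, ∀ u' ∈ U, ∀ h, X.SepHOn S h u u' → h ∈ U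

def UnidirectionalOn (S : Set X.V) (U : Set X.H) : Prop :=
  ∀ u ∈ U, ∃ b : Bool, {h | h ∈ U ∧ X.InHalfOn S h u b}.Finite

def NoFacingTripleOn (S : Set X.V) (U : Set X.H) : Prop :=
  ∀ h₁ ∈ U, ∀ h₂ ∈ U, ∀ h₃ ∈ U, ¬ (h₁ ≠ h₂ ∧ h₁ ≠ h₃ ∧ h₂ ≠ h₃ ∧
    ∃ b₁ b₂ b₃ : Bool,
      X.InHalfOn S h₂ h₁ b₁ ∧ X.InHalfOn S h₃ h₁ b₁ ∧
      X.InHalfOn S h₁ h₂ b₂ ∧ X.InHalfOn S h₃ h₂ b₂ ∧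
      X.InHalfOn S h₁ h₃ b₃ ∧ X.InHalfOn S h₂ h₃ b₃)

/-- A UBS of the subcomplex with 0-cube set `S`. -/
def IsUBSOn (S : Set X.V) (U : Set X.H) : Prop :=
  (∀ h ∈ U, X.CrossesSet S h) ∧ U.Infinite ∧ X.InseparableOn S U ∧
    X.UnidirectionalOn S U ∧ X.NoFacingTripleOn S U

def MinUBSOn (S : Set X.V) (U : Set X.H) : Prop :=
  X.IsUBSOn S U ∧ ∀ U' ⊆ U, X.IsUBSOn S U' → X.AlmostEq U U'

def FaceOfOn (S : Set X.V) (U V : Set X.H) : Prop :=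
  ∃ U' V', X.IsUBSOn S U' ∧ X.IsUBSOn S V' ∧ X.AlmostEq U U' ∧ X.AlmostEq V V' ∧ U' ⊆ V'

def HasDimOn (S : Set X.V) (U : Set X.H) (k : ℕ) : Prop :=
  ∃ 𝒰 : Fin k → Set X.H, (∀ i, X.MinUBSOn S (𝒰 i)) ∧
    (∀ i j, i ≠ j → Disjoint (𝒰 i) (𝒰 j)) ∧ X.AlmostEq U (⋃ i, 𝒰 i)

end CCC

section FoldHelpers

attribute [local instance] Classical.propDecidable

variable (X : CCC)

private lemma bool_ne_ne {a b c : Bool} (h1 : a ≠ b) (h2 : c ≠ b) : a = c := by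
  cases a <;> cases b <;> cases c <;> simp_all

private lemma bool_eq_not {a b : Bool} (h : a ≠ b) : b = !a := by
  cases a <;> cases b <;> simp_all

private lemma bool_iff_cases {a b c d : Bool} (h : a = c ↔ b = d) :
    (c = d → a = b) ∧ (c ≠ d → a = !b) := by
  cases a <;> cases b <;> cases c <;> cases d <;> simp_all

lemma fold_mem_sep {x y : X.V} {h : X.H} :
    h ∈ (X.sep_finite x y).toFinset ↔ X.side h x ≠ X.side h y := by
  simp

lemma fold_dist_card (x y : X.V) : X.dist x y = (X.sep_finite x y).toFinset.card := rfl

lemma fold_dist_self (x : X.V) : X.dist x x = 0 := by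
  rw [fold_dist_card, Finset.card_eq_zero, Finset.eq_empty_iff_forall_notMem]
  intro h hh
  exact (fold_mem_sep X).1 hh rfl

lemma fold_dist_eq_zero {x y : X.V} (h : X.dist x y = 0) : x = y := by
  apply X.vertex_ext
  intro hh
  by_contra hne
  have hm : hh ∈ (X.sep_finite x y).toFinset := (fold_mem_sep X).2 hne
  rw [fold_dist_card, Finset.card_eq_zero] at h
  simp [h] at hm

lemma fold_sep_union (x y z : X.V) :
    (X.sep_finite x z).toFinset ⊆
      (X.sep_finite x y).toFinset ∪ (X.sep_finite y z).toFinset := by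
  intro h hh
  rw [fold_mem_sep] at hh
  rw [Finset.mem_union, fold_mem_sep, fold_mem_sep]
  by_contra hc
  push_neg at hc
  obtain ⟨e1, e2⟩ := hc
  exact hh (e1.trans e2)

lemma fold_dist_triangle (x y z : X.V) : X.dist x z ≤ X.dist x y + X.dist y z := by
  rw [fold_dist_card, fold_dist_card, fold_dist_card]
  exact le_trans (Finset.card_le_card (fold_sep_union X x y z)) (Finset.card_union_le _ _)

lemma fold_dist_add (x y z : X.V)
    (hd : ∀ h, X.side h x ≠ X.side h y → X.side h y = X.side h z) :
    X.dist x z = X.dist x y + X.dist y z := by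
  have hunion : (X.sep_finite x z).toFinset =
      (X.sep_finite x y).toFinset ∪ (X.sep_finite y z).toFinset := by
    apply Finset.Subset.antisymm (fold_sep_union X x y z)
    intro h hh
    rw [Finset.mem_union, fold_mem_sep, fold_mem_sep] at hh
    rw [fold_mem_sep]
    rcases hh with h1 | h1
    · have e := hd h h1
      intro hc
      exact h1 (hc.trans e.symm)
    · have e : X.side h x = X.side h y := by
        by_contra h2
        exact h1 (hd h h2)
      intro hc
      exact h1 (e.symm.trans hc)
  have hdisj : Disjoint (X.sep_finite x y).toFinset (X.sep_finite y z).toFinset := by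
    rw [Finset.disjoint_left]
    intro h h1 h2
    exact (fold_mem_sep X).1 h2 (hd h ((fold_mem_sep X).1 h1))
  rw [fold_dist_card, fold_dist_card, fold_dist_card, hunion,
    Finset.card_union_of_disjoint hdisj]

lemma fold_sep_eq_union (x y z : X.V)
    (hadd : X.dist x y + X.dist y z = X.dist x z) :
    (X.sep_finite x y).toFinset ∪ (X.sep_finite y z).toFinset
      = (X.sep_finite x z).toFinset := by
  have hcard : ((X.sep_finite x y).toFinset ∪ (X.sep_finite y z).toFinset).card ≤
      (X.sep_finite x z).toFinset.card := by
    calc ((X.sep_finite x y).toFinset ∪ (X.sep_finite y z).toFinset).card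
        ≤ (X.sep_finite x y).toFinset.card + (X.sep_finite y z).toFinset.card :=
          Finset.card_union_le _ _
      _ = (X.sep_finite x z).toFinset.card := hadd
  exact (Finset.eq_of_subset_of_card_le (fold_sep_union X x y z) hcard).symm

lemma fold_sep_left (x y z : X.V)
    (hadd : X.dist x y + X.dist y z = X.dist x z) :
    ∀ h, X.side h x ≠ X.side h y → X.side h x ≠ X.side h z := by
  intro h hh
  have hm : h ∈ (X.sep_finite x z).toFinset := by
    rw [← fold_sep_eq_union X x y z hadd, Finset.mem_union]
    exact Or.inl ((fold_mem_sep X).2 hh)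
  exact (fold_mem_sep X).1 hm

lemma fold_sep_right (x y z : X.V)
    (hadd : X.dist x y + X.dist y z = X.dist x z) :
    ∀ h, X.side h y ≠ X.side h z → X.side h x ≠ X.side h z := by
  intro h hh
  have hm : h ∈ (X.sep_finite x z).toFinset := by
    rw [← fold_sep_eq_union X x y z hadd, Finset.mem_union]
    exact Or.inr ((fold_mem_sep X).2 hh)
  exact (fold_mem_sep X).1 hm

lemma fold_sep_unique {u v : X.V} (hd : X.dist u v = 1) {h h' : X.H}
    (h1 : X.side h u ≠ X.side h v) (h2 : X.side h' u ≠ X.side h' v) : h = h' := by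
  rw [fold_dist_card] at hd
  obtain ⟨a, ha⟩ := Finset.card_eq_one.1 hd
  have m1 : h ∈ (X.sep_finite u v).toFinset := (fold_mem_sep X).2 h1
  have m2 : h' ∈ (X.sep_finite u v).toFinset := (fold_mem_sep X).2 h2
  rw [ha, Finset.mem_singleton] at m1 m2
  rw [m1, m2]

lemma fold_exists_flip_index (c : ℕ → X.V) (h : X.H) (a b : ℕ) (hab : a ≤ b)
    (hne : X.side h (c a) ≠ X.side h (c b)) :
    ∃ j, a ≤ j ∧ j < b ∧ X.side h (c j) ≠ X.side h (c (j + 1)):= by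
  by_contra hc
  push_neg at hc
  have key : ∀ k, a + k ≤ b → X.side h (c (a + k)) = X.side h (c a) := by
    intro k
    induction k with
    | zero => intro _; rfl
    | succ k ih =>
      intro hkb
      have e := hc (a + k) (by omega) (by omega)
      have : a + (k + 1) = (a + k) + 1 := by omega
      rw [this, ← e]
      exact ih (by omega)
  have := key (b - a) (by omega)
  rw [show a + (b - a) = b by omega] at this
  exact hne this.symm

/-- Flip a minimal separating hyperplane. -/
lemma fold_flip (x z : X.V) (hne : x ≠ z) :
    ∃ (x' : X.V) (h₀ : X.H), X.side h₀ x ≠ X.side h₀ z ∧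
      ∀ h, X.side h x' = if h = h₀ then X.side h z else X.side h x := by
  classical
  set S := (X.sep_finite x z).toFinset with hS
  have hSne : S.Nonempty := by
    by_contra hemp
    apply hne
    apply X.vertex_ext
    intro h
    by_contra hcc
    exact hemp ⟨h, (fold_mem_sep X).2 hcc⟩
  have hmemS : ∀ h, h ∈ S ↔ X.side h x ≠ X.side h z := fun h => by
    rw [hS]; exact fold_mem_sep X
  set below : X.H → Finset X.H := fun h =>
    S.filter (fun h' => ∀ w, X.side h w = X.side h z → X.side h' w = X.side h' z)
    with hbelow
  obtain ⟨h₀, h₀S, hmin⟩ := S.exists_min_image (fun h => (below h).card) hSne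
  have key : ∀ h' ∈ S, h' ≠ h₀ →
      ∃ w, X.side h₀ w = X.side h₀ z ∧ X.side h' w = X.side h' x := by
    intro h' h'S hne'
    by_contra hcc
    push_neg at hcc
    have h'le : ∀ w, X.side h₀ w = X.side h₀ z → X.side h' w = X.side h' z := by
      intro w hw
      have := hcc w hw
      exact bool_ne_ne this (Ne.symm ((hmemS h').1 h'S))
    have hmem0 : h₀ ∈ below h₀ := by
      rw [hbelow, Finset.mem_filter]
      exact ⟨h₀S, fun w hw => hw⟩
    have hnm : h₀ ∉ below h' := by
      rw [hbelow, Finset.mem_filter]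
      rintro ⟨-, h0le⟩
      apply hne'
      -- halfspaces of h₀ and h' coincide; conclude h' = h₀
      have hiff : ∀ w, X.side h₀ w = X.side h₀ z ↔ X.side h' w = X.side h' z :=
        fun w => ⟨h'le w, h0le w⟩
      by_cases hb : X.side h₀ z = X.side h' z
      · symm
        apply X.hyp_inj
        intro w
        exact (bool_iff_cases (hiff w)).1 hb
      · symm
        apply X.hyp_inj'
        intro w
        exact (bool_iff_cases (hiff w)).2 hb
    have hssub : below h' ⊂ below h₀ := by
      constructor
      · intro h'' h''m
        rw [hbelow, Finset.mem_filter] at h''m ⊢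
        exact ⟨h''m.1, fun w hw => h''m.2 w (h'le w hw)⟩
      · intro hsub
        have hm' : h' ∈ below h₀ := by
          rw [hbelow, Finset.mem_filter]
          exact ⟨h'S, h'le⟩
        exact hnm (hsub hmem0)
    have := Finset.card_lt_card hssub
    have := hmin h' h'S
    omega
  -- realize the flipped vertex
  have hcons : ∀ h h', ∃ w,
      X.side h w = (if h = h₀ then X.side h z else X.side h x) ∧
      X.side h' w = (if h' = h₀ then X.side h' z else X.side h' x) := by
    intro h h'
    by_cases e1 : h = h₀ <;> by_cases e2 : h' = h₀
    · exact ⟨z, by rw [if_pos e1], by rw [if_pos e2]⟩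
    · by_cases h'S : X.side h' x ≠ X.side h' z
      · obtain ⟨w, hw1, hw2⟩ := key h' ((hmemS h').2 h'S) e2
        exact ⟨w, by rw [if_pos e1, e1]; exact hw1, by rw [if_neg e2]; exact hw2⟩
      · rw [not_ne_iff] at h'S
        exact ⟨z, by rw [if_pos e1, e1], by rw [if_neg e2, h'S]⟩
    · by_cases hhS : X.side h x ≠ X.side h z
      · obtain ⟨w, hw1, hw2⟩ := key h ((hmemS h).2 hhS) e1
        exact ⟨w, by rw [if_neg e1]; exact hw2, by rw [if_pos e2, e2]; exact hw1⟩
      · rw [not_ne_iff] at hhS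
        exact ⟨z, by rw [if_neg e1, hhS], by rw [if_pos e2, e2]⟩
    · exact ⟨x, by rw [if_neg e1], by rw [if_neg e2]⟩
  have hfin : {h : X.H | (if h = h₀ then X.side h z else X.side h x) ≠ X.side h x}.Finite := by
    apply Set.Finite.subset (Set.finite_singleton h₀)
    intro h hh
    simp only [Set.mem_setOf_eq] at hh
    by_contra hcc
    simp only [Set.mem_singleton_iff] at hcc
    rw [if_neg hcc] at hh
    exact hh rfl
  obtain ⟨x', hx'⟩ := X.realize _ x hcons hfin
  exact ⟨x', h₀, (hmemS h₀).1 h₀S, hx'⟩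

lemma fold_geod : ∀ (n : ℕ) (x z : X.V), X.dist x z = n →
    ∃ c : ℕ → X.V, c 0 = x ∧ (∀ k, n ≤ k → c k = z) ∧
      (∀ i, X.dist (c i) (c (i + 1)) ≤ 1) ∧
      (∀ i, i ≤ n → X.dist x (c i) = i ∧ X.dist (c i) z = n - i) := by
  intro n
  induction n with
  | zero =>
    intro x z hd
    have := fold_dist_eq_zero X hd
    subst this
    exact ⟨fun _ => x, rfl, fun k _ => rfl,
      fun i => by rw [fold_dist_self]; omega,
      fun i hi => by rw [fold_dist_self]; omega⟩
  | succ n ih =>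
    intro x z hd
    have hne : x ≠ z := by
      intro e
      rw [e, fold_dist_self] at hd
      omega
    obtain ⟨x', h₀, hsep, hx'⟩ := fold_flip X x z hne
    have hsxx' : (X.sep_finite x x').toFinset = {h₀} := by
      ext h
      rw [fold_mem_sep, Finset.mem_singleton]
      constructor
      · intro hh
        by_contra hcc
        rw [hx' h, if_neg hcc] at hh
        exact hh rfl
      · intro e
        subst e
        rw [hx' h, if_pos rfl]
        exact hsep
    have hdxx' : X.dist x x' = 1 := by
      rw [fold_dist_card, hsxx']
      rfl
    have hdx'z : X.dist x' z = n := by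
      have hsx'z : (X.sep_finite x' z).toFinset = (X.sep_finite x z).toFinset.erase h₀ := by
        ext h
        rw [fold_mem_sep, Finset.mem_erase, fold_mem_sep]
        constructor
        · intro hh
          have hne0 : h ≠ h₀ := by
            intro e
            subst e
            rw [hx' h, if_pos rfl] at hh
            exact hh rfl
          rw [hx' h, if_neg hne0] at hh
          exact ⟨hne0, hh⟩
        · rintro ⟨hne0, hh⟩
          rw [hx' h, if_neg hne0]
          exact hh
      rw [fold_dist_card, hsx'z, Finset.card_erase_of_mem ((fold_mem_sep X).2 hsep)]
      rw [fold_dist_card] at hd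
      omega
    obtain ⟨c', hc'0, hc'e, hc's, hc'd⟩ := ih x' z hdx'z
    refine ⟨fun k => Nat.casesOn k x (fun j => c' j), rfl, ?_, ?_, ?_⟩
    · intro k hk
      cases k with
      | zero => omega
      | succ j => exact hc'e j (by omega)
    · intro i
      cases i with
      | zero =>
        show X.dist x (c' 0) ≤ 1
        rw [hc'0, hdxx']
      | succ j => exact hc's j
    · intro i hi
      cases i with
      | zero =>
        constructor
        · exact fold_dist_self X x
        · exact hd
      | succ j =>
        have hj : j ≤ n := by omega
        obtain ⟨d1, d2⟩ := hc'd j hj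
        constructor
        · show X.dist x (c' j) = j + 1
          have t1 : X.dist x (c' j) ≤ X.dist x x' + X.dist x' (c' j) :=
            fold_dist_triangle X x x' (c' j)
          have t2 : X.dist x z ≤ X.dist x (c' j) + X.dist (c' j) z :=
            fold_dist_triangle X x (c' j) z
          rw [hdxx', d1] at t1
          rw [hd, d2] at t2
          omega
        · show X.dist (c' j) z = n + 1 - (j + 1)
          rw [d2]
          omega

lemma fold_ray (c : ℕ → X.V) (hstep : ∀ i, X.dist (c i) (c (i + 1)) ≤ 1)
    (hd : ∀ n, X.dist (c 0) (c n) = n) : X.IsGeodesicRay c := by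
  have upper : ∀ m n, m ≤ n → X.dist (c m) (c n) ≤ n - m := by
    intro m n hmn
    induction n with
    | zero =>
      have : m = 0 := by omega
      subst this
      rw [fold_dist_self]
    | succ n ihn =>
      by_cases hm : m = n + 1
      · subst hm
        rw [fold_dist_self]
        omega
      · have hmn' : m ≤ n := by omega
        have := fold_dist_triangle X (c m) (c n) (c (n + 1))
        have h2 := hstep n
        have h3 := ihn hmn'
        omega
  intro m n hmn
  have h1 := hd n
  have h2 := hd m
  have tri := fold_dist_triangle X (c 0) (c m) (c n)
  have up := upper m n hmn
  omega

lemma fold_ray_left (γ : ℕ → X.V) (hγ : X.IsGeodesicRay γ) {h : X.H} {m i : ℕ}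
    (hmi : m ≤ i) (hf : X.side h (γ i) ≠ X.side h (γ (i + 1))) :
    X.side h (γ m) = X.side h (γ i) := by
  by_contra hc
  have hadd : X.dist (γ m) (γ i) + X.dist (γ i) (γ (i + 1)) = X.dist (γ m) (γ (i + 1))
    := by rw [hγ m i hmi, hγ i (i + 1) (by omega), hγ m (i + 1) (by omega)]; omega
  exact fold_sep_left X _ _ _ hadd h hc (bool_ne_ne hc (Ne.symm hf))

lemma fold_ray_right (γ : ℕ → X.V) (hγ : X.IsGeodesicRay γ) {h : X.H} {i n : ℕ}
    (hin : i + 1 ≤ n) (hf : X.side h (γ i) ≠ X.side h (γ (i + 1))) :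
    X.side h (γ (i + 1)) = X.side h (γ n) := by
  by_contra hc
  have hadd : X.dist (γ i) (γ (i + 1)) + X.dist (γ (i + 1)) (γ n) = X.dist (γ i) (γ n)
    := by rw [hγ i (i + 1) (by omega), hγ (i + 1) n hin, hγ i n (by omega)]; omega
  exact fold_sep_right X _ _ _ hadd h hc (bool_ne_ne hf (Ne.symm hc))

end FoldHelpers

/-- **Folding Lemma** (Lemma 4.16).  If the combinatorial geodesic rays
`γ₁, γ₂` have the same initial 0-cube and a common dual hyperplane `H`, dual
to `γ₁([s,s+1])` and `γ₂([t,t+1])` with `s ≤ t`, then there are combinatorial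
geodesic rays `γ'₁, γ'₂` containing `γ₁([s+1,∞))` and `γ₂([t+1,∞))`
respectively, which coincide along an initial segment starting at `γ₁ 0`
whose terminal 1-cube is dual to `H`. -/
theorem folding_lemma (X : CCC) (γ₁ γ₂ : ℕ → X.V)
    (h₁ : X.IsGeodesicRay γ₁) (h₂ : X.IsGeodesicRay γ₂) (h0 : γ₁ 0 = γ₂ 0)
    (H : X.H) (s t : ℕ) (hst : s ≤ t)
    (hd1 : X.side H (γ₁ s) ≠ X.side H (γ₁ (s + 1)))
    (hd2 : X.side H (γ₂ t) ≠ X.side H (γ₂ (t + 1))) :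
    ∃ (γ'₁ γ'₂ : ℕ → X.V) (L : ℕ),
      X.IsGeodesicRay γ'₁ ∧ X.IsGeodesicRay γ'₂ ∧ 1 ≤ L ∧
      γ'₁ 0 = γ₁ 0 ∧
      (∀ i ≤ L, γ'₁ i = γ'₂ i) ∧
      X.side H (γ'₁ (L - 1)) ≠ X.side H (γ'₁ L) ∧
      (∀ n : ℕ, γ'₁ (s + 1 + n) = γ₁ (s + 1 + n)) ∧
      (∀ n : ℕ, γ'₂ (t + 1 + n) = γ₂ (t + 1 + n)) := by
  classical
  have e0s : X.side H (γ₁ 0) = X.side H (γ₁ s) :=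
    fold_ray_left X γ₁ h₁ (Nat.zero_le s) hd1
  have hHA : X.side H (γ₁ 0) ≠ X.side H (γ₁ (s + 1)) := by rw [e0s]; exact hd1
  have e0t : X.side H (γ₂ 0) = X.side H (γ₂ t) :=
    fold_ray_left X γ₂ h₂ (Nat.zero_le t) hd2
  have hHB : X.side H (γ₁ 0) ≠ X.side H (γ₂ (t + 1)) := by rw [h0, e0t]; exact hd2
  -- construct the median y of γ₁ 0, γ₁ (s+1), γ₂ (t+1)
  set o : X.H → Bool := fun h =>
    if X.side h (γ₁ 0) ≠ X.side h (γ₁ (s + 1)) ∧ X.side h (γ₁ 0) ≠ X.side h (γ₂ (t + 1))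
    then !(X.side h (γ₁ 0)) else X.side h (γ₁ 0) with ho
  have main : ∀ g : X.H,
      (X.side g (γ₁ 0) ≠ X.side g (γ₁ (s + 1)) ∧ X.side g (γ₁ 0) ≠ X.side g (γ₂ (t + 1))) →
      o g = !(X.side g (γ₁ 0)) := by
    intro g hg; simp only [ho]; rw [if_pos hg]
  have main2 : ∀ g : X.H,
      ¬(X.side g (γ₁ 0) ≠ X.side g (γ₁ (s + 1)) ∧ X.side g (γ₁ 0) ≠ X.side g (γ₂ (t + 1))) →
      o g = X.side g (γ₁ 0) := by
    intro g hg; simp only [ho]; rw [if_neg hg]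
  have hcons : ∀ h h', ∃ w, X.side h w = o h ∧ X.side h' w = o h' := by
    intro h h'
    by_cases P1 : X.side h (γ₁ 0) ≠ X.side h (γ₁ (s + 1)) ∧
        X.side h (γ₁ 0) ≠ X.side h (γ₂ (t + 1)) <;>
      by_cases P2 : X.side h' (γ₁ 0) ≠ X.side h' (γ₁ (s + 1)) ∧
        X.side h' (γ₁ 0) ≠ X.side h' (γ₂ (t + 1))
    · exact ⟨γ₁ (s + 1), by rw [main h P1]; exact bool_eq_not P1.1,
        by rw [main h' P2]; exact bool_eq_not P2.1⟩
    · rcases not_and_or.mp P2 with hA | hB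
      · rw [not_ne_iff] at hA
        exact ⟨γ₁ (s + 1), by rw [main h P1]; exact bool_eq_not P1.1,
          by rw [main2 h' P2]; exact hA.symm⟩
      · rw [not_ne_iff] at hB
        exact ⟨γ₂ (t + 1), by rw [main h P1]; exact bool_eq_not P1.2,
          by rw [main2 h' P2]; exact hB.symm⟩
    · rcases not_and_or.mp P1 with hA | hB
      · rw [not_ne_iff] at hA
        exact ⟨γ₁ (s + 1), by rw [main2 h P1]; exact hA.symm,
          by rw [main h' P2]; exact bool_eq_not P2.1⟩
      · rw [not_ne_iff] at hB
        exact ⟨γ₂ (t + 1), by rw [main2 h P1]; exact hB.symm,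
          by rw [main h' P2]; exact bool_eq_not P2.2⟩
    · exact ⟨γ₁ 0, by rw [main2 h P1], by rw [main2 h' P2]⟩
  have hfin : {h : X.H | o h ≠ X.side h (γ₁ 0)}.Finite := by
    apply Set.Finite.subset (X.sep_finite (γ₁ 0) (γ₁ (s + 1)))
    intro h hh
    simp only [Set.mem_setOf_eq] at hh ⊢
    by_contra hc
    apply hh
    apply main2
    rintro ⟨hA, -⟩
    exact hA hc
  obtain ⟨y, hy⟩ := X.realize o (γ₁ 0) hcons hfin
  have hy1 : ∀ h, X.side h (γ₁ 0) ≠ X.side h (γ₁ (s + 1)) →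
      X.side h (γ₁ 0) ≠ X.side h (γ₂ (t + 1)) → X.side h y = !(X.side h (γ₁ 0)) := by
    intro h a b; rw [hy h, main h ⟨a, b⟩]
  have hy2 : ∀ h, ¬(X.side h (γ₁ 0) ≠ X.side h (γ₁ (s + 1)) ∧
      X.side h (γ₁ 0) ≠ X.side h (γ₂ (t + 1))) → X.side h y = X.side h (γ₁ 0) := by
    intro h hn; rw [hy h, main2 h hn]
  have hsepxy : ∀ h, X.side h (γ₁ 0) ≠ X.side h y ↔
      (X.side h (γ₁ 0) ≠ X.side h (γ₁ (s + 1)) ∧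
       X.side h (γ₁ 0) ≠ X.side h (γ₂ (t + 1))) := by
    intro h
    constructor
    · intro hne
      by_contra hn
      rw [hy2 h hn] at hne
      exact hne rfl
    · rintro ⟨a, b⟩
      rw [hy1 h a b]
      cases (X.side h (γ₁ 0)) <;> simp
  obtain ⟨L, hLdef⟩ : ∃ L, X.dist (γ₁ 0) y = L := ⟨_, rfl⟩
  have hHxy : X.side H (γ₁ 0) ≠ X.side H y := by
    rw [hy1 H hHA hHB]
    cases (X.side H (γ₁ 0)) <;> simp
  have hL1 : 1 ≤ L := by
    rw [← hLdef, fold_dist_card]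
    exact Finset.card_pos.2 ⟨H, (fold_mem_sep X).2 hHxy⟩
  have hdxp : X.dist (γ₁ 0) (γ₁ (s + 1)) = s + 1 := by
    have := h₁ 0 (s + 1) (by omega); simpa using this
  have hdxq : X.dist (γ₁ 0) (γ₂ (t + 1)) = t + 1 := by
    rw [h0]; have := h₂ 0 (t + 1) (by omega); simpa using this
  have haddp : X.dist (γ₁ 0) (γ₁ (s + 1)) = L + X.dist y (γ₁ (s + 1)) := by
    rw [← hLdef]
    refine fold_dist_add X (γ₁ 0) y (γ₁ (s + 1)) (fun h hxy => ?_)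
    obtain ⟨a, b⟩ := (hsepxy h).1 hxy
    rw [hy1 h a b]
    exact (bool_eq_not a).symm
  have haddq : X.dist (γ₁ 0) (γ₂ (t + 1)) = L + X.dist y (γ₂ (t + 1)) := by
    rw [← hLdef]
    refine fold_dist_add X (γ₁ 0) y (γ₂ (t + 1)) (fun h hxy => ?_)
    obtain ⟨a, b⟩ := (hsepxy h).1 hxy
    rw [hy1 h a b]
    exact (bool_eq_not b).symm
  have hLp : L ≤ s + 1 := by omega
  have hLt : L ≤ t + 1 := by omega
  have dyp : X.dist y (γ₁ (s + 1)) = s + 1 - L := by omega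
  have dyq : X.dist y (γ₂ (t + 1)) = t + 1 - L := by omega
  -- construct y', the neighbour of y across H towards the basepoint
  have key : ∀ h', h' ≠ H →
      ∃ w, X.side H w = X.side H (γ₁ 0) ∧ X.side h' w = X.side h' y := by
    intro h' hne'
    by_cases hsep : X.side h' (γ₁ 0) ≠ X.side h' y
    · obtain ⟨a, b⟩ := (hsepxy h').1 hsep
      obtain ⟨j, hj0, hjs, hjf⟩ := fold_exists_flip_index X γ₁ h' 0 (s + 1) (by omega) a
      have hjne : j ≠ s := by
        intro e
        subst e
        have hdj : X.dist (γ₁ j) (γ₁ (j + 1)) = 1 := by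
          have := h₁ j (j + 1) (by omega); simpa using this
        exact hne' (fold_sep_unique X hdj hjf hd1)
      have hjs' : j + 1 ≤ s := by omega
      refine ⟨γ₁ (j + 1), ?_, ?_⟩
      · have e1 : X.side H (γ₁ (j + 1)) = X.side H (γ₁ s) :=
          fold_ray_left X γ₁ h₁ hjs' hd1
        rw [e1, ← e0s]
      · have e2 : X.side h' (γ₁ (j + 1)) = X.side h' (γ₁ (s + 1)) :=
          fold_ray_right X γ₁ h₁ (by omega) hjf
        rw [e2, hy1 h' a b]
        exact bool_eq_not a
    · rw [not_ne_iff] at hsep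
      exact ⟨γ₁ 0, rfl, hsep⟩
  have hcons' : ∀ h h', ∃ w,
      X.side h w = (if h = H then X.side h (γ₁ 0) else X.side h y) ∧
      X.side h' w = (if h' = H then X.side h' (γ₁ 0) else X.side h' y) := by
    intro h h'
    by_cases e1 : h = H <;> by_cases e2 : h' = H
    · exact ⟨γ₁ 0, by rw [if_pos e1, e1], by rw [if_pos e2, e2]⟩
    · obtain ⟨w, w1, w2⟩ := key h' e2
      exact ⟨w, by rw [if_pos e1, e1]; exact w1, by rw [if_neg e2]; exact w2⟩
    · obtain ⟨w, w1, w2⟩ := key h e1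
      exact ⟨w, by rw [if_neg e1]; exact w2, by rw [if_pos e2, e2]; exact w1⟩
    · exact ⟨y, by rw [if_neg e1], by rw [if_neg e2]⟩
  have hfin' : {h : X.H |
      (if h = H then X.side h (γ₁ 0) else X.side h y) ≠ X.side h y}.Finite := by
    apply Set.Finite.subset (Set.finite_singleton H)
    intro h hh
    simp only [Set.mem_setOf_eq] at hh
    simp only [Set.mem_singleton_iff]
    by_contra hc
    rw [if_neg hc] at hh
    exact hh rfl
  obtain ⟨y', hy'⟩ := X.realize _ y hcons' hfin'
  have hy'H : X.side H y' = X.side H (γ₁ 0) := by rw [hy' H, if_pos rfl]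
  have hy'o : ∀ h, h ≠ H → X.side h y' = X.side h y := by
    intro h hne; rw [hy' h, if_neg hne]
  have hy'y : X.side H y' ≠ X.side H y := by rw [hy'H]; exact hHxy
  have hdxy' : X.dist (γ₁ 0) y' = L - 1 := by
    have heq : (X.sep_finite (γ₁ 0) y').toFinset =
        (X.sep_finite (γ₁ 0) y).toFinset.erase H := by
      ext h
      rw [fold_mem_sep, Finset.mem_erase, fold_mem_sep]
      by_cases e : h = H
      · subst e
        rw [hy'H]
        simp
      · rw [hy'o h e]
        simp [e]
    rw [fold_dist_card, heq, Finset.card_erase_of_mem ((fold_mem_sep X).2 hHxy),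
      ← fold_dist_card, hLdef]
  have hdy'y : X.dist y' y ≤ 1 := by
    rw [fold_dist_card]
    have hsub : (X.sep_finite y' y).toFinset ⊆ {H} := by
      intro h hh
      rw [fold_mem_sep] at hh
      rw [Finset.mem_singleton]
      by_contra e
      rw [hy'o h e] at hh
      exact hh rfl
    calc (X.sep_finite y' y).toFinset.card ≤ ({H} : Finset X.H).card :=
          Finset.card_le_card hsub
      _ = 1 := rfl
  -- the three geodesic pieces
  obtain ⟨c₀, hc00, hc0e, hc0s, hc0d⟩ := fold_geod X (L - 1) (γ₁ 0) y' hdxy'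
  obtain ⟨c₁, hc10, hc1e, hc1s, hc1d⟩ := fold_geod X (s + 1 - L) y (γ₁ (s + 1)) dyp
  obtain ⟨c₂, hc20, hc2e, hc2s, hc2d⟩ := fold_geod X (t + 1 - L) y (γ₂ (t + 1)) dyq
  have hxc1 : ∀ k, k ≤ s + 1 - L → X.dist (γ₁ 0) (c₁ k) = L + k := by
    intro k hk
    have hadd : X.dist (γ₁ 0) (c₁ k) = X.dist (γ₁ 0) y + X.dist y (c₁ k) := by
      refine fold_dist_add X (γ₁ 0) y (c₁ k) (fun h hxy => ?_)
      obtain ⟨a, b⟩ := (hsepxy h).1 hxy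
      by_contra hcc
      have haddy : X.dist y (c₁ k) + X.dist (c₁ k) (γ₁ (s + 1)) = X.dist y (γ₁ (s + 1)) := by
        rw [(hc1d k hk).1, (hc1d k hk).2, dyp]; omega
      apply fold_sep_left X y (c₁ k) (γ₁ (s + 1)) haddy h hcc
      rw [hy1 h a b]
      exact (bool_eq_not a).symm
    rw [hadd, (hc1d k hk).1, hLdef]
  have hxc2 : ∀ k, k ≤ t + 1 - L → X.dist (γ₁ 0) (c₂ k) = L + k := by
    intro k hk
    have hadd : X.dist (γ₁ 0) (c₂ k) = X.dist (γ₁ 0) y + X.dist y (c₂ k) := by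
      refine fold_dist_add X (γ₁ 0) y (c₂ k) (fun h hxy => ?_)
      obtain ⟨a, b⟩ := (hsepxy h).1 hxy
      by_contra hcc
      have haddy : X.dist y (c₂ k) + X.dist (c₂ k) (γ₂ (t + 1)) = X.dist y (γ₂ (t + 1)) := by
        rw [(hc2d k hk).1, (hc2d k hk).2, dyq]; omega
      apply fold_sep_left X y (c₂ k) (γ₂ (t + 1)) haddy h hcc
      rw [hy1 h a b]
      exact (bool_eq_not b).symm
    rw [hadd, (hc2d k hk).1, hLdef]
  -- the folded rays
  set g1 : ℕ → X.V := fun n =>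
    if n < L then c₀ n else if n ≤ s + 1 then c₁ (n - L) else γ₁ n with hg1
  set g2 : ℕ → X.V := fun n =>
    if n < L then c₀ n else if n ≤ t + 1 then c₂ (n - L) else γ₂ n with hg2
  have v1a : ∀ n, n < L → g1 n = c₀ n := by
    intro n hn; simp only [hg1]; rw [if_pos hn]
  have v1b : ∀ n, ¬ n < L → n ≤ s + 1 → g1 n = c₁ (n - L) := by
    intro n hn1 hn2; simp only [hg1]; rw [if_neg hn1, if_pos hn2]
  have v1c : ∀ n, ¬ n ≤ s + 1 → g1 n = γ₁ n := by
    intro n hn2; simp only [hg1]; rw [if_neg (by omega : ¬ n < L), if_neg hn2]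
  have v2a : ∀ n, n < L → g2 n = c₀ n := by
    intro n hn; simp only [hg2]; rw [if_pos hn]
  have v2b : ∀ n, ¬ n < L → n ≤ t + 1 → g2 n = c₂ (n - L) := by
    intro n hn1 hn2; simp only [hg2]; rw [if_neg hn1, if_pos hn2]
  have v2c : ∀ n, ¬ n ≤ t + 1 → g2 n = γ₂ n := by
    intro n hn2; simp only [hg2]; rw [if_neg (by omega : ¬ n < L), if_neg hn2]
  have g1L : g1 L = y := by
    rw [v1b L (by omega) (by omega), Nat.sub_self, hc10]
  have g2L : g2 L = y := by
    rw [v2b L (by omega) (by omega), Nat.sub_self, hc20]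
  have g1Lm : g1 (L - 1) = y' := by
    rw [v1a (L - 1) (by omega)]
    exact hc0e (L - 1) le_rfl
  have g10 : g1 0 = γ₁ 0 := by
    rw [v1a 0 (by omega)]; exact hc00
  have d1 : ∀ n, X.dist (γ₁ 0) (g1 n) = n := by
    intro n
    by_cases hn1 : n < L
    · rw [v1a n hn1]; exact (hc0d n (by omega)).1
    · by_cases hn2 : n ≤ s + 1
      · rw [v1b n hn1 hn2, hxc1 (n - L) (by omega)]; omega
      · rw [v1c n hn2]
        have := h₁ 0 n (by omega)
        simpa using this
  have d2 : ∀ n, X.dist (γ₁ 0) (g2 n) = n := by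
    intro n
    by_cases hn1 : n < L
    · rw [v2a n hn1]; exact (hc0d n (by omega)).1
    · by_cases hn2 : n ≤ t + 1
      · rw [v2b n hn1 hn2, hxc2 (n - L) (by omega)]; omega
      · rw [v2c n hn2, h0]
        have := h₂ 0 n (by omega)
        simpa using this
  have steps1 : ∀ i, X.dist (g1 i) (g1 (i + 1)) ≤ 1 := by
    intro i
    by_cases hA : i + 1 < L
    · rw [v1a i (by omega), v1a (i + 1) hA]; exact hc0s i
    · by_cases hB : i + 1 = L
      · rw [v1a i (by omega), show c₀ i = y' from hc0e i (by omega), hB, g1L]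
        exact hdy'y
      · by_cases hC : i + 1 ≤ s + 1
        · rw [v1b i (by omega) (by omega), v1b (i + 1) (by omega) hC,
            show i + 1 - L = (i - L) + 1 from by omega]
          exact hc1s (i - L)
        · have e1 : g1 i = γ₁ i := by
            by_cases hD : i ≤ s + 1
            · have hi : i = s + 1 := by omega
              rw [hi, v1b (s + 1) (by omega) le_rfl, hc1e (s + 1 - L) le_rfl]
            · exact v1c i hD
          rw [e1, v1c (i + 1) (by omega)]
          have := h₁ i (i + 1) (by omega)
          omega
  have steps2 : ∀ i, X.dist (g2 i) (g2 (i + 1)) ≤ 1 := by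
    intro i
    by_cases hA : i + 1 < L
    · rw [v2a i (by omega), v2a (i + 1) hA]; exact hc0s i
    · by_cases hB : i + 1 = L
      · rw [v2a i (by omega), show c₀ i = y' from hc0e i (by omega), hB, g2L]
        exact hdy'y
      · by_cases hC : i + 1 ≤ t + 1
        · rw [v2b i (by omega) (by omega), v2b (i + 1) (by omega) hC,
            show i + 1 - L = (i - L) + 1 from by omega]
          exact hc2s (i - L)
        · have e1 : g2 i = γ₂ i := by
            by_cases hD : i ≤ t + 1
            · have hi : i = t + 1 := by omega
              rw [hi, v2b (t + 1) (by omega) le_rfl, hc2e (t + 1 - L) le_rfl]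
            · exact v2c i hD
          rw [e1, v2c (i + 1) (by omega)]
          have := h₂ i (i + 1) (by omega)
          omega
  have ray1 : X.IsGeodesicRay g1 :=
    fold_ray X g1 steps1 (by intro n; rw [g10]; exact d1 n)
  have ray2 : X.IsGeodesicRay g2 :=
    fold_ray X g2 steps2 (by intro n; rw [show g2 0 = γ₁ 0 from by
      rw [v2a 0 (by omega)]; exact hc00]; exact d2 n)
  refine ⟨g1, g2, L, ray1, ray2, hL1, g10, ?_, ?_, ?_, ?_⟩
  · intro i hi
    by_cases hi' : i < L
    · rw [v1a i hi', v2a i hi']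
    · have : i = L := by omega
      rw [this, g1L, g2L]
  · rw [g1Lm, g1L]
    exact hy'y
  · intro n
    cases n with
    | zero =>
      simp only [Nat.add_zero]
      rw [v1b (s + 1) (by omega) le_rfl, hc1e (s + 1 - L) le_rfl]
    | succ m =>
      exact v1c (s + 1 + (m + 1)) (by omega)
  · intro n
    cases n with
    | zero =>
      simp only [Nat.add_zero]
      rw [v2b (t + 1) (by omega) le_rfl, hc2e (t + 1 - L) le_rfl]
    | succ m =>
      exact v2c (t + 1 + (m + 1)) (by omega)
end

section
/- Let X be a CAT(0) cube complex in which every family of pairwise-crossing hyperplanes is finite, and let v be an n-simplex of the simplicial boundary ∂X each of whose 0-dimensional faces is visible. Then there exists a cubical isometric embedding R → X, where R is the standard tiling of [0,∞)^{n+1} by unit (n+1)-dimensional cubes (isometric with respect to the combinatorial path-metrics on 1-skeleta). -/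
/-!
Each of the `n + 1` minimal UBSs making up `V` is visible, say through a geodesic ray `γ i`.
Late hyperplanes of distinct rays cross: otherwise, since two non-crossing hyperplanes of one ray
are nested and infinite crossing families are excluded, Ramsey's theorem gives nested sequences of
late non-crossing pairs on both rays, and one of these hyperplanes then has infinitely many
hyperplanes of `V` on each side, against unidirectionality. After cutting off initial segments,
every hyperplane of `γ i` crosses every hyperplane of `γ j`. By Sageev duality the vertex of the
orthant at `p` is the orientation giving each hyperplane of `γ i` its side at `γ i (p i)`, the
other hyperplanes being oriented consistently and independently of `p`; two such vertices are
then separated exactly by the hyperplanes of the rays between `γ i (p i)` and `γ i (q i)`.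
-/

open Filter Set Function

namespace CCC

variable {X : CCC}

def sep (X : CCC) (x y : X.V) : Set X.H := {h | X.side h x ≠ X.side h y}

def farHalf (X : CCC) (h : X.H) (x : X.V) : Set X.V := {z | X.side h z ≠ X.side h x}

lemma sep_comm (x y : X.V) : X.sep x y = X.sep y x := by
  ext h; exact ne_comm

lemma finite_sep (x y : X.V) : (X.sep x y).Finite := X.sep_finite x y

lemma dist_eq_ncard (x y : X.V) : X.dist x y = (X.sep x y).ncard :=
  (ncard_eq_toFinset_card _ (X.sep_finite x y)).symm

lemma dist_comm (x y : X.V) : X.dist x y = X.dist y x := by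
  rw [dist_eq_ncard, dist_eq_ncard, sep_comm]

lemma farHalf_congr {h : X.H} {x y : X.V} (hxy : X.side h x = X.side h y) :
    X.farHalf h x = X.farHalf h y := by
  simp only [farHalf, hxy]

lemma not_crosses_self (h : X.H) : ¬ X.Crosses h h := fun hc => by
  obtain ⟨x, hx, hx'⟩ := hc true false
  exact absurd (hx.symm.trans hx') (by decide)

lemma Crosses.symm {h h' : X.H} (hc : X.Crosses h h') : X.Crosses h' h :=
  fun b b' => (hc b' b).imp fun _ hx => hx.symm

lemma crosses_of_farHalf {h h' : X.H} {x x' : X.V}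
    (hnn : ∃ z, z ∉ X.farHalf h x ∧ z ∉ X.farHalf h' x')
    (hfn : ∃ z, z ∈ X.farHalf h x ∧ z ∉ X.farHalf h' x')
    (hnf : ∃ z, z ∉ X.farHalf h x ∧ z ∈ X.farHalf h' x')
    (hff : ∃ z, z ∈ X.farHalf h x ∧ z ∈ X.farHalf h' x') : X.Crosses h h' := by
  intro b b'
  rcases Bool.eq_or_eq_not b (X.side h x) with rfl | rfl <;>
    rcases Bool.eq_or_eq_not b' (X.side h' x') with rfl | rfl
  · obtain ⟨z, hz, hz'⟩ := hnn
    exact ⟨z, not_not.mp hz, not_not.mp hz'⟩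
  · obtain ⟨z, hz, hz'⟩ := hnf
    exact ⟨z, not_not.mp hz, Bool.eq_not_iff.mpr hz'⟩
  · obtain ⟨z, hz, hz'⟩ := hfn
    exact ⟨z, Bool.eq_not_iff.mpr hz, not_not.mp hz'⟩
  · obtain ⟨z, hz, hz'⟩ := hff
    exact ⟨z, Bool.eq_not_iff.mpr hz, Bool.eq_not_iff.mpr hz'⟩

lemma AlmostEq.diff_finite {U U' : Set X.H} (hU : X.AlmostEq U U') : (U \ U').Finite :=
  hU.subset le_sup_left

lemma AlmostEq.diff_finite' {U U' : Set X.H} (hU : X.AlmostEq U U') : (U' \ U).Finite :=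
  hU.subset le_sup_right

lemma IsUBS.inter {U V : Set X.H} (hU : X.IsUBS U) (hV : X.Inseparable V)
    (hinf : (U ∩ V).Infinite) : X.IsUBS (U ∩ V) := by
  obtain ⟨-, hUsep, hUdir, hUtri⟩ := hU
  refine ⟨hinf, fun u hu u' hu' h hh => ⟨hUsep u hu.1 u' hu'.1 h hh, hV u hu.2 u' hu'.2 h hh⟩,
    fun u hu => ?_, fun h₁ h₁m h₂ h₂m h₃ h₃m => hUtri h₁ h₁m.1 h₂ h₂m.1 h₃ h₃m.1⟩
  obtain ⟨b, hb⟩ := hUdir u hu.1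
  exact ⟨b, hb.subset fun h hh => ⟨hh.1.1, hh.2⟩⟩

lemma faceOf_of_diff_finite {U V : Set X.H} (hU : X.IsUBS U) (hV : X.IsUBS V)
    (hUV : (U \ V).Finite) : X.FaceOf U V := by
  have hinf : (U ∩ V).Infinite := by rw [← sdiff_sdiff_right_self]; exact hU.1.sdiff hUV
  refine ⟨U ∩ V, V, hU.inter hV.2.1 hinf, hV, ?_, by simp [AlmostEq], inter_subset_right⟩
  refine hUV.subset ?_
  rintro h (⟨hhU, hhUV⟩ | ⟨⟨hhU, -⟩, hhU'⟩)
  exacts [⟨hhU, fun hhV => hhUV ⟨hhU, hhV⟩⟩, absurd hhU hhU']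

lemma inHalf_of_disjoint_farHalf {h u : X.H} (hne : h ≠ u) {x y : X.V}
    (hd : Disjoint (X.farHalf h x) (X.farHalf u y)) : X.InHalf h u (X.side u y) :=
  ⟨hne, X.side h x, fun z hz => not_not.mp fun hzh =>
    hd.ne_of_mem hzh (show X.side u z ≠ X.side u y by simp [hz]) rfl⟩

lemma inHalf_of_farHalf_subset {h u : X.H} (hne : h ≠ u) {x y : X.V}
    (hs : X.farHalf h x ⊆ X.farHalf u y) : X.InHalf h u (!X.side u y) :=
  ⟨hne, X.side h x, fun z hz => not_not.mp fun hzh => hs hzh (by simpa using hz)⟩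

/-- `G' 0` has all the `G t` on one side and all the `G' (t + 1)` on the other. -/
lemma not_unidirectional_of_nested_facing {V : Set X.H} {x y : X.V} {G G' : ℕ → X.H}
    (hG : Injective G) (hG' : Injective G') (hGV : ∀ t, G t ∈ V) (hG'V : ∀ t, G' t ∈ V)
    (hne : ∀ t, G t ≠ G' 0) (hnest : ∀ t, X.farHalf (G t) x ⊆ X.farHalf (G 0) x)
    (hnest' : ∀ t, X.farHalf (G' t) y ⊆ X.farHalf (G' 0) y)
    (hface : Disjoint (X.farHalf (G 0) x) (X.farHalf (G' 0) y)) : ¬ X.Unidirectional V := by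
  intro hV
  have hnear : {h | h ∈ V ∧ X.InHalf h (G' 0) (X.side (G' 0) y)}.Infinite :=
    infinite_of_injective_forall_mem hG fun t =>
      ⟨hGV t, inHalf_of_disjoint_farHalf (hne t) (hface.mono_left (hnest t))⟩
  have hfar : {h | h ∈ V ∧ X.InHalf h (G' 0) (!X.side (G' 0) y)}.Infinite :=
    infinite_of_injective_forall_mem (hG'.comp Nat.succ_injective) fun t =>
      ⟨hG'V _, inHalf_of_farHalf_subset (hG'.ne t.succ_ne_zero) (hnest' _)⟩
  obtain ⟨b, hb⟩ := hV _ (hG'V 0)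
  rcases Bool.eq_or_eq_not b (X.side (G' 0) y) with rfl | rfl
  exacts [hnear hb, hfar hb]

section Path

variable {γ : ℕ → X.V} {h : X.H}

lemma side_eq_of_notMem_WSet (hh : h ∉ X.WSet γ) (t : ℕ) : X.side h (γ t) = X.side h (γ 0) := by
  induction t with
  | zero => rfl
  | succ t ih => exact (not_not.mp fun hne => hh ⟨t, Ne.symm hne⟩).trans ih

lemma sep_subset_WSet (a b : ℕ) : X.sep (γ a) (γ b) ⊆ X.WSet γ := fun h hh => by
  by_contra hW
  exact hh (by rw [side_eq_of_notMem_WSet hW a, side_eq_of_notMem_WSet hW b])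

lemma exists_side_eq_of_mem_WSet (hh : h ∈ X.WSet γ) (b : Bool) : ∃ t, X.side h (γ t) = b := by
  obtain ⟨n, hn⟩ := hh
  by_cases hb : X.side h (γ n) = b
  exacts [⟨n, hb⟩,
    ⟨n + 1, (Bool.eq_not_iff.mpr hn.symm).trans (Bool.eq_not_iff.mpr (Ne.symm hb)).symm⟩]

lemma exists_notMem_farHalf (hh : h ∈ X.WSet γ) (x : X.V) : ∃ t, γ t ∉ X.farHalf h x := by
  obtain ⟨t, ht⟩ := exists_side_eq_of_mem_WSet hh (X.side h x)
  exact ⟨t, fun hne => hne ht⟩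

lemma exists_mem_farHalf (hh : h ∈ X.WSet γ) (x : X.V) : ∃ t, γ t ∈ X.farHalf h x := by
  obtain ⟨t, ht⟩ := exists_side_eq_of_mem_WSet hh (!X.side h x)
  exact ⟨t, by simp [farHalf, ht]⟩

lemma notMem_farHalf_of_notMem_WSet (hh : h ∉ X.WSet γ) (t : ℕ) : γ t ∉ X.farHalf h (γ 0) :=
  fun hne => hne (side_eq_of_notMem_WSet hh t)

end Path

namespace IsGeodesicRay

variable {γ : ℕ → X.V}

lemma dist_eq (hγ : X.IsGeodesicRay γ) (a b : ℕ) : X.dist (γ a) (γ b) = Nat.dist a b := by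
  rcases le_total a b with hab | hab
  · rw [hγ a b hab, Nat.dist_eq_sub_of_le hab]
  · rw [dist_comm, hγ b a hab, Nat.dist_eq_sub_of_le_right hab]

lemma shift (hγ : X.IsGeodesicRay γ) (M : ℕ) : X.IsGeodesicRay fun t => γ (M + t) :=
  fun m n hmn => by rw [hγ (M + m) (M + n) (by omega), Nat.add_sub_add_left]

lemma ncard_sep_succ (hγ : X.IsGeodesicRay γ) (m : ℕ) : (X.sep (γ m) (γ (m + 1))).ncard = 1 := by
  rw [← dist_eq_ncard, hγ m (m + 1) m.le_succ, Nat.add_sub_cancel_left]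

/-- The hyperplane dual to the `m`-th edge of `γ`. -/
noncomputable def hyp (hγ : X.IsGeodesicRay γ) (m : ℕ) : X.H :=
  (ncard_eq_one.mp (hγ.ncard_sep_succ m)).choose

lemma sep_succ (hγ : X.IsGeodesicRay γ) (m : ℕ) : X.sep (γ m) (γ (m + 1)) = {hγ.hyp m} :=
  (ncard_eq_one.mp (hγ.ncard_sep_succ m)).choose_spec

lemma hyp_mem_WSet (hγ : X.IsGeodesicRay γ) (m : ℕ) : hγ.hyp m ∈ X.WSet γ :=
  ⟨m, show hγ.hyp m ∈ X.sep (γ m) (γ (m + 1)) by rw [hγ.sep_succ]; rfl⟩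

lemma exists_hyp_eq_of_mem_WSet_shift (hγ : X.IsGeodesicRay γ)
    {M : ℕ} {h : X.H} (hh : h ∈ X.WSet fun t => γ (M + t)) : ∃ m ≥ M, hγ.hyp m = h := by
  obtain ⟨n, hn⟩ := hh
  have hsep : h ∈ X.sep (γ (M + n)) (γ (M + n + 1)) := hn
  rw [hγ.sep_succ] at hsep
  exact ⟨M + n, Nat.le_add_right M n, hsep.symm⟩

lemma sep_zero_subset (hγ : X.IsGeodesicRay γ) (t : ℕ) : X.sep (γ 0) (γ t) ⊆ hγ.hyp '' Iio t := by
  induction t with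
  | zero => exact fun h hh => absurd rfl hh
  | succ t ih =>
    intro h hh
    by_cases h0 : X.side h (γ 0) = X.side h (γ t)
    · have : h ∈ X.sep (γ t) (γ (t + 1)) := fun ht => hh (h0.trans ht)
      rw [hγ.sep_succ] at this
      exact ⟨t, t.lt_succ_self, this.symm⟩
    · obtain ⟨s, hs, rfl⟩ := ih h0
      exact ⟨s, lt_trans hs t.lt_succ_self, rfl⟩

lemma sep_zero_eq (hγ : X.IsGeodesicRay γ) (t : ℕ) : X.sep (γ 0) (γ t) = hγ.hyp '' Iio t := by
  refine eq_of_subset_of_ncard_le (hγ.sep_zero_subset t) ?_ ((finite_Iio t).image _)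
  rw [← dist_eq_ncard, hγ 0 t t.zero_le, Nat.sub_zero]
  exact (ncard_image_le (finite_Iio t)).trans_eq (ncard_Iio_nat t)

lemma hyp_injective (hγ : X.IsGeodesicRay γ) : Injective hγ.hyp := fun a b hab => by
  have hinj : InjOn hγ.hyp (Iio (max a b + 1)) := by
    rw [← ncard_image_iff (finite_Iio _), ← hγ.sep_zero_eq, ← dist_eq_ncard,
      hγ 0 _ (Nat.zero_le _), Nat.sub_zero, ncard_Iio_nat]
  exact hinj (by simp only [mem_Iio]; omega) (by simp only [mem_Iio]; omega) hab

lemma mem_farHalf_hyp_iff (hγ : X.IsGeodesicRay γ) (m t : ℕ) :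
    γ t ∈ X.farHalf (hγ.hyp m) (γ 0) ↔ m < t := by
  rw [← mem_Iio, ← hγ.hyp_injective.mem_set_image, ← hγ.sep_zero_eq]
  exact ne_comm

lemma farHalf_hyp_subset (hγ : X.IsGeodesicRay γ) {m m' : ℕ} (hmm' : m < m')
    (hc : ¬ X.Crosses (hγ.hyp m) (hγ.hyp m')) :
    X.farHalf (hγ.hyp m') (γ 0) ⊆ X.farHalf (hγ.hyp m) (γ 0) := fun x hx => by
  by_contra hxm
  refine hc (crosses_of_farHalf ⟨γ 0, fun h => h rfl, fun h => h rfl⟩ ⟨γ (m + 1), ?_, ?_⟩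
    ⟨x, hxm, hx⟩ ⟨γ (m' + 1), ?_, ?_⟩) <;> simp only [mem_farHalf_hyp_iff] <;> omega

lemma eventually_hyp_notMem (hγ : X.IsGeodesicRay γ) {S : Set X.H} (hS : S.Finite) :
    ∀ᶠ m in atTop, hγ.hyp m ∉ S :=
  Nat.cofinite_eq_atTop ▸ hγ.hyp_injective.tendsto_cofinite.eventually hS.eventually_cofinite_notMem

lemma eventually_hyp_mem_of_finite {γ' : ℕ → X.V} (hγ : X.IsGeodesicRay γ)
    {V : Set X.H} (hWV : (X.WSet γ \ V).Finite) (hWW' : (X.WSet γ ∩ X.WSet γ').Finite) :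
    ∀ᶠ m in atTop, hγ.hyp m ∈ V ∧ hγ.hyp m ∉ X.WSet γ' ∧
      X.side (hγ.hyp m) (γ' 0) = X.side (hγ.hyp m) (γ 0) := by
  filter_upwards [hγ.eventually_hyp_notMem (hWV.union (hWW'.union (X.sep_finite (γ 0) (γ' 0))))]
    with m hm
  simp only [mem_union, not_or] at hm
  exact ⟨not_not.mp fun hV => hm.1 ⟨hγ.hyp_mem_WSet m, hV⟩,
    fun hW => hm.2.1 ⟨hγ.hyp_mem_WSet m, hW⟩, not_not.mp fun hne => hm.2.2 (Ne.symm hne)⟩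

/-- Infinite Ramsey: two hyperplanes of `γ` that do not cross are nested, and infinite
pairwise-crossing families are excluded. -/
lemma exists_nested_subseq (hγ : X.IsGeodesicRay γ) (hX : X.NoInfiniteCrossing) {k : ℕ → ℕ}
    (hk : Tendsto k atTop atTop) :
    ∃ ψ : ℕ → ℕ, StrictMono ψ ∧ StrictMono (k ∘ ψ) ∧ ∀ a b, a < b →
      X.farHalf (hγ.hyp (k (ψ b))) (γ 0) ⊆ X.farHalf (hγ.hyp (k (ψ a))) (γ 0) := by
  obtain ⟨φ, hφ, hkφ⟩ := strictMono_subseq_of_tendsto_atTop hk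
  let r : ℕ → ℕ → Prop := fun a b => X.farHalf (hγ.hyp b) (γ 0) ⊆ X.farHalf (hγ.hyp a) (γ 0)
  have : IsTrans ℕ r := ⟨fun _ _ _ hab hbc => hbc.trans hab⟩
  obtain ⟨g, hnest | hnot⟩ := exists_increasing_or_nonincreasing_subseq r (k ∘ φ)
  · exact ⟨φ ∘ g, hφ.comp g.strictMono, hkφ.comp g.strictMono, hnest⟩
  have hmono : StrictMono (k ∘ φ ∘ g) := hkφ.comp g.strictMono
  have hcross : ∀ a b, a < b → X.Crosses (hγ.hyp (k (φ (g a)))) (hγ.hyp (k (φ (g b)))) :=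
    fun a b hab => by_contra fun hc => hnot a b hab (hγ.farHalf_hyp_subset (hmono hab) hc)
  refine absurd (hX (range (hγ.hyp ∘ k ∘ φ ∘ g)) ?_)
    (infinite_range_of_injective (hγ.hyp_injective.comp hmono.injective))
  rintro _ ⟨a, rfl⟩ _ ⟨b, rfl⟩ hne
  rcases lt_or_gt_of_ne (ne_of_apply_ne _ hne) with hab | hab
  exacts [hcross a b hab, (hcross b a hab).symm]

end IsGeodesicRay

lemma disjoint_farHalf_of_not_crosses {γ γ' : ℕ → X.V} {h h' : X.H} (hh : h ∈ X.WSet γ)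
    (hh' : h' ∈ X.WSet γ') (hhγ' : h ∉ X.WSet γ') (hh'γ : h' ∉ X.WSet γ)
    (hc : ¬ X.Crosses h h') : Disjoint (X.farHalf h (γ' 0)) (X.farHalf h' (γ 0)) := by
  by_contra hd
  obtain ⟨x, hx, hx'⟩ := not_disjoint_iff.mp hd
  obtain ⟨s, hs⟩ := exists_notMem_farHalf hh (γ' 0)
  obtain ⟨t, ht⟩ := exists_mem_farHalf hh (γ' 0)
  obtain ⟨s', hs'⟩ := exists_mem_farHalf hh' (γ 0)
  exact hc (crosses_of_farHalf ⟨γ s, hs, notMem_farHalf_of_notMem_WSet hh'γ s⟩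
    ⟨γ t, ht, notMem_farHalf_of_notMem_WSet hh'γ t⟩
    ⟨γ' s', notMem_farHalf_of_notMem_WSet hhγ' s', hs'⟩ ⟨x, hx, hx'⟩)

/-- A pair of late non-crossing hyperplanes of `γ` and `γ'` has disjoint far halfspaces; after
passing to subsequences whose far halfspaces are nested along each ray, the first hyperplane of
`γ'` has infinitely many hyperplanes of `V` on each side. -/
lemma exists_tails_cross (hX : X.NoInfiniteCrossing) {V : Set X.H} (hV : X.Unidirectional V)
    {γ γ' : ℕ → X.V} (hγ : X.IsGeodesicRay γ) (hγ' : X.IsGeodesicRay γ') {L : ℕ}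
    (hL : ∀ m ≥ L, hγ.hyp m ∈ V ∧ hγ.hyp m ∉ X.WSet γ' ∧
      X.side (hγ.hyp m) (γ' 0) = X.side (hγ.hyp m) (γ 0))
    (hL' : ∀ k ≥ L, hγ'.hyp k ∈ V ∧ hγ'.hyp k ∉ X.WSet γ ∧
      X.side (hγ'.hyp k) (γ 0) = X.side (hγ'.hyp k) (γ' 0)) :
    ∃ M, ∀ m ≥ M, ∀ k ≥ M, X.Crosses (hγ.hyp m) (hγ'.hyp k) := by
  by_contra! hbad
  choose m hm k hk hnc using fun M => hbad (M + L)
  have hm_top : Tendsto m atTop atTop :=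
    tendsto_atTop_mono (fun M => (Nat.le_add_right M L).trans (hm M)) tendsto_id
  have hk_top : Tendsto k atTop atTop :=
    tendsto_atTop_mono (fun M => (Nat.le_add_right M L).trans (hk M)) tendsto_id
  obtain ⟨ψ, hψ, hmψ, hnest⟩ := hγ.exists_nested_subseq hX hm_top
  obtain ⟨ψ', hψ', hkψ', hnest'⟩ := hγ'.exists_nested_subseq hX (hk_top.comp hψ.tendsto_atTop)
  have hlate := fun t => hL _ ((Nat.le_add_left L _).trans (hm (ψ (ψ' t))))
  have hlate' := fun t => hL' _ ((Nat.le_add_left L _).trans (hk (ψ (ψ' t))))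
  refine not_unidirectional_of_nested_facing (x := γ 0) (y := γ' 0)
    (G := fun t => hγ.hyp (m (ψ (ψ' t)))) (G' := fun t => hγ'.hyp (k (ψ (ψ' t))))
    (hγ.hyp_injective.comp (hmψ.comp hψ').injective) (hγ'.hyp_injective.comp hkψ'.injective)
    (fun t => (hlate t).1) (fun t => (hlate' t).1)
    (fun t heq => (hlate t).2.1 (heq ▸ hγ'.hyp_mem_WSet _))
    (fun t => t.eq_zero_or_pos.elim (fun ht => ht ▸ subset_rfl) fun ht => hnest _ _ (hψ' ht))
    (fun t => t.eq_zero_or_pos.elim (fun ht => ht ▸ subset_rfl) fun ht => hnest' _ _ ht) ?_ hV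
  rw [← farHalf_congr (hlate 0).2.2, ← farHalf_congr (hlate' 0).2.2]
  exact disjoint_farHalf_of_not_crosses (hγ.hyp_mem_WSet _) (hγ'.hyp_mem_WSet _) (hlate 0).2.1
    (hlate' 0).2.1 (hnc _)

theorem eventually_tails_cross (hX : X.NoInfiniteCrossing) {V : Set X.H}
    (hV : X.Unidirectional V) {γ γ' : ℕ → X.V} (hγ : X.IsGeodesicRay γ)
    (hγ' : X.IsGeodesicRay γ') (hWV : (X.WSet γ \ V).Finite) (hW'V : (X.WSet γ' \ V).Finite)
    (hWW' : (X.WSet γ ∩ X.WSet γ').Finite) :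
    ∀ᶠ M in atTop, ∀ h ∈ X.WSet (fun t => γ (M + t)), ∀ h' ∈ X.WSet (fun t => γ' (M + t)),
      X.Crosses h h' := by
  obtain ⟨L, hL⟩ := eventually_atTop.mp ((hγ.eventually_hyp_mem_of_finite hWV hWW').and
    (hγ'.eventually_hyp_mem_of_finite hW'V (inter_comm _ _ ▸ hWW')))
  obtain ⟨M, hM⟩ := exists_tails_cross hX hV hγ hγ' (fun m hm => (hL m hm).1)
    (fun k hk => (hL k hk).2)
  filter_upwards [eventually_ge_atTop M] with M' hM' h hh h' hh'
  obtain ⟨m, hm, rfl⟩ := hγ.exists_hyp_eq_of_mem_WSet_shift hh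
  obtain ⟨k, hk, rfl⟩ := hγ'.exists_hyp_eq_of_mem_WSet_shift hh'
  exact hM m (hM'.trans hm) k (hM'.trans hk)

def RaysCross (X : CCC) {ι : Type*} (γ : ι → ℕ → X.V) : Prop :=
  Pairwise fun i j => ∀ h ∈ X.WSet (γ i), ∀ h' ∈ X.WSet (γ j), X.Crosses h h'

theorem eventually_raysCross_shift {ι : Type*} [Finite ι] (hX : X.NoInfiniteCrossing)
    {V : Set X.H} (hV : X.Unidirectional V) {γ : ι → ℕ → X.V}
    (hγ : ∀ i, X.IsGeodesicRay (γ i)) (hWV : ∀ i, (X.WSet (γ i) \ V).Finite)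
    (hWW : Pairwise fun i j => (X.WSet (γ i) ∩ X.WSet (γ j)).Finite) :
    ∀ᶠ M in atTop, X.RaysCross fun i t => γ i (M + t) := by
  have hpair : ∀ i j, ∀ᶠ M in atTop, i ≠ j → ∀ h ∈ X.WSet (fun t => γ i (M + t)),
      ∀ h' ∈ X.WSet (fun t => γ j (M + t)), X.Crosses h h' := fun i j => by
    rcases eq_or_ne i j with rfl | hij
    · exact Eventually.of_forall fun _ hii => absurd rfl hii
    · exact (eventually_tails_cross hX hV (hγ i) (hγ j) (hWV i) (hWV j) (hWW hij)).mono
        fun _ hM _ => hM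
  filter_upwards [eventually_all.2 fun i => eventually_all.2 (hpair i)] with M hM i j hij
  exact hM i j hij

namespace RaysCross

variable {ι : Type*} {γ : ι → ℕ → X.V}

lemma disjoint (hc : X.RaysCross γ) {i j : ι} (hij : i ≠ j) :
    Disjoint (X.WSet (γ i)) (X.WSet (γ j)) :=
  disjoint_left.mpr fun h hi hj => not_crosses_self h (hc hij h hi h hj)

def Forced (γ : ι → ℕ → X.V) (i : ι) (g : X.H) : Prop :=
  ∃ h ∈ X.WSet (γ i), ∃ b, ∀ x, X.side h x = b → X.side g x = X.side g (γ i 0)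

lemma forced_of_mem {i : ι} {g : X.H} (hg : g ∈ X.WSet (γ i)) : Forced γ i g :=
  ⟨g, hg, _, fun _ hx => hx⟩

lemma side_eq_of_forced (hc : X.RaysCross γ) {i j : ι} {g : X.H} (hi : Forced γ i g)
    (hj : Forced γ j g) : X.side g (γ i 0) = X.side g (γ j 0) := by
  rcases eq_or_ne i j with rfl | hij
  · rfl
  obtain ⟨h, hh, b, hb⟩ := hi
  obtain ⟨h', hh', b', hb'⟩ := hj
  obtain ⟨x, hx, hx'⟩ := hc hij h hh h' hh' b b'
  exact (hb x hx).symm.trans (hb' x hx')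

lemma eq_of_forced (hc : X.RaysCross γ) {i j : ι} {g : X.H} (hg : g ∈ X.WSet (γ i))
    (hj : Forced γ j g) : j = i := by
  by_contra hji
  obtain ⟨h, hh, b, hb⟩ := hj
  obtain ⟨x, hx, hgx⟩ := hc hji h hh g hg b (!X.side g (γ j 0))
  exact Bool.not_ne_self _ (hgx.symm.trans (hb x hx))

/-- The orientation of the orthant vertex `p`. Forcing rays of a hyperplane give it the same side
because hyperplanes of distinct rays cross; a hyperplane of `γ i` is forced only by `γ i`. -/
noncomputable def cornerSide (γ : ι → ℕ → X.V) (x₀ : X.V) (p : ι → ℕ) (g : X.H) : Bool :=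
  open Classical in
  if hg : ∃ i, Forced γ i g then X.side g (γ hg.choose (p hg.choose)) else X.side g x₀

lemma cornerSide_of_mem (hc : X.RaysCross γ) {i : ι} {g : X.H} (hg : g ∈ X.WSet (γ i))
    (x₀ : X.V) (p : ι → ℕ) : cornerSide γ x₀ p g = X.side g (γ i (p i)) := by
  have hf : ∃ j, Forced γ j g := ⟨i, forced_of_mem hg⟩
  rw [cornerSide, dif_pos hf, hc.eq_of_forced hg hf.choose_spec]

lemma cornerSide_of_forced (hc : X.RaysCross γ) {i : ι} {g : X.H} (hg : ∀ j, g ∉ X.WSet (γ j))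
    (hi : Forced γ i g) (x₀ : X.V) (p : ι → ℕ) : cornerSide γ x₀ p g = X.side g (γ i 0) := by
  have hf : ∃ j, Forced γ j g := ⟨i, hi⟩
  rw [cornerSide, dif_pos hf, side_eq_of_notMem_WSet (hg _), hc.side_eq_of_forced hf.choose_spec hi]

lemma cornerSide_eq_or (γ : ι → ℕ → X.V) (x₀ : X.V) (g : X.H) :
    (∃ i, ∀ q, cornerSide γ x₀ q g = X.side g (γ i (q i))) ∨
      ∀ q, cornerSide γ x₀ q g = X.side g x₀ := by
  by_cases hf : ∃ i, Forced γ i g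
  exacts [Or.inl ⟨hf.choose, fun q => dif_pos hf⟩, Or.inr fun q => dif_neg hf]

lemma exists_side_eq_cornerSide (hc : X.RaysCross γ) {i : ι} {h g : X.H}
    (hh : h ∈ X.WSet (γ i)) (hg : ∀ j, g ∉ X.WSet (γ j)) (x₀ : X.V) (p : ι → ℕ) (b : Bool) :
    ∃ x, X.side h x = b ∧ X.side g x = cornerSide γ x₀ p g := by
  by_cases he : cornerSide γ x₀ p g = X.side g (γ i 0)
  · obtain ⟨t, ht⟩ := exists_side_eq_of_mem_WSet hh b
    exact ⟨γ i t, ht, by rw [he, side_eq_of_notMem_WSet (hg i)]⟩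
  · obtain ⟨x, hx, hgx⟩ : ∃ x, X.side h x = b ∧ X.side g x ≠ X.side g (γ i 0) := by
      by_contra! hforced
      exact he (hc.cornerSide_of_forced hg ⟨h, hh, b, hforced⟩ x₀ p)
    exact ⟨x, hx, (Bool.eq_not_iff.mpr hgx).trans (Bool.eq_not_iff.mpr he).symm⟩

lemma exists_side_eq_cornerSide_of_forced (hc : X.RaysCross γ) {j : ι} {g g' : X.H}
    (hg : ∀ i, g ∉ X.WSet (γ i)) (hg' : ∀ i, g' ∉ X.WSet (γ i)) (hj : Forced γ j g')
    (x₀ : X.V) (p : ι → ℕ) :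
    ∃ x, X.side g x = cornerSide γ x₀ p g ∧ X.side g' x = cornerSide γ x₀ p g' := by
  obtain ⟨h, hh, b, hb⟩ := id hj
  obtain ⟨x, hx, hgx⟩ := hc.exists_side_eq_cornerSide hh hg x₀ p b
  exact ⟨x, hgx, by rw [hc.cornerSide_of_forced hg' hj, hb x hx]⟩

lemma cornerSide_consistent (hc : X.RaysCross γ) (x₀ : X.V) (p : ι → ℕ) (g g' : X.H) :
    ∃ x, X.side g x = cornerSide γ x₀ p g ∧ X.side g' x = cornerSide γ x₀ p g' := by
  by_cases hg : ∃ i, g ∈ X.WSet (γ i) <;> by_cases hg' : ∃ j, g' ∈ X.WSet (γ j)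
  · obtain ⟨i, hi⟩ := hg
    obtain ⟨j, hj⟩ := hg'
    rw [hc.cornerSide_of_mem hi, hc.cornerSide_of_mem hj]
    rcases eq_or_ne i j with rfl | hij
    exacts [⟨γ i (p i), rfl, rfl⟩, hc hij g hi g' hj _ _]
  · obtain ⟨i, hi⟩ := hg
    rw [hc.cornerSide_of_mem hi]
    exact hc.exists_side_eq_cornerSide hi (not_exists.mp hg') x₀ p _
  · obtain ⟨j, hj⟩ := hg'
    rw [hc.cornerSide_of_mem hj]
    exact (hc.exists_side_eq_cornerSide hj (not_exists.mp hg) x₀ p _).imp fun _ => And.symm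
  simp only [not_exists] at hg hg'
  by_cases hf' : ∃ j, Forced γ j g'
  · exact hc.exists_side_eq_cornerSide_of_forced hg hg' hf'.choose_spec x₀ p
  by_cases hf : ∃ i, Forced γ i g
  · exact (hc.exists_side_eq_cornerSide_of_forced hg' hg hf.choose_spec x₀ p).imp
      fun _ => And.symm
  exact ⟨x₀, by rw [cornerSide, dif_neg hf], by rw [cornerSide, dif_neg hf']⟩

lemma exists_corner [Finite ι] (hc : X.RaysCross γ) (x₀ : X.V) (p : ι → ℕ) :
    ∃ c, ∀ g, X.side g c = cornerSide γ x₀ p g := by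
  refine X.realize _ x₀ (hc.cornerSide_consistent x₀ p)
    ((finite_iUnion fun i => finite_sep (γ i (p i)) x₀).subset fun g hg => ?_)
  rcases cornerSide_eq_or γ x₀ g with ⟨i, hi⟩ | h0
  · exact mem_iUnion.mpr ⟨i, (hi p).symm.trans_ne hg⟩
  · exact absurd (h0 p) hg

lemma sep_eq_iUnion (hc : X.RaysCross γ) {x₀ : X.V} {c : (ι → ℕ) → X.V}
    (hcs : ∀ p g, X.side g (c p) = cornerSide γ x₀ p g) (p q : ι → ℕ) :
    X.sep (c p) (c q) = ⋃ i, X.sep (γ i (p i)) (γ i (q i)) := by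
  ext g
  rw [mem_iUnion]
  change X.side g (c p) ≠ X.side g (c q) ↔ ∃ i, X.side g (γ i (p i)) ≠ X.side g (γ i (q i))
  rw [hcs, hcs]
  constructor
  · intro hne
    rcases cornerSide_eq_or γ x₀ g with ⟨i, hi⟩ | h0
    · exact ⟨i, by rwa [hi p, hi q] at hne⟩
    · exact absurd (by rw [h0 p, h0 q]) hne
  · rintro ⟨i, hi⟩
    have hg := sep_subset_WSet (γ := γ i) (p i) (q i) hi
    rwa [hc.cornerSide_of_mem hg, hc.cornerSide_of_mem hg]

theorem exists_orthant [Fintype ι] (hγ : ∀ i, X.IsGeodesicRay (γ i)) (hc : X.RaysCross γ) :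
    ∃ e : (ι → ℕ) → X.V, ∀ p q, X.dist (e p) (e q) = ∑ i, Nat.dist (p i) (q i) := by
  obtain ⟨x₀⟩ := X.nonempty_V
  choose c hcs using hc.exists_corner x₀
  refine ⟨c, fun p q => ?_⟩
  have hdisj : Pairwise (Disjoint on fun i => X.sep (γ i (p i)) (γ i (q i))) := fun i j hij =>
    (hc.disjoint hij).mono (sep_subset_WSet _ _) (sep_subset_WSet _ _)
  rw [dist_eq_ncard, hc.sep_eq_iUnion hcs,
    ncard_iUnion_of_finite (fun i => finite_sep _ _) hdisj, finsum_eq_sum_of_fintype]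
  exact Finset.sum_congr rfl fun i _ => by rw [← dist_eq_ncard, (hγ i).dist_eq]

end RaysCross

end CCC

/-- Theorem 4.17.  If `v` is an `n`-simplex of `∂X` (a UBS of dimension
`n+1`), each of whose 0-dimensional faces is visible, then the standard
tiling of `[0,∞)^{n+1}` by unit `(n+1)`-cubes embeds isometrically and
cubically into `X` (here recorded on 0-skeleta: an `ℓ¹`-isometric embedding
of the vertex set `ℕ^{n+1}`). -/
theorem visible_simplex_gives_orthant (X : CCC) (hX : X.NoInfiniteCrossing)
    (n : ℕ) (V : Set X.H) (hV : X.IsUBS V) (hdim : X.HasDim V (n + 1))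
    (hvis : ∀ U : Set X.H, X.MinUBS U → X.FaceOf U V →
      ∃ γ : ℕ → X.V, X.IsGeodesicRay γ ∧ X.AlmostEq (X.WSet γ) U) :
    ∃ e : (Fin (n + 1) → ℕ) → X.V,
      ∀ p q, X.dist (e p) (e q) = ∑ i, Nat.dist (p i) (q i) := by
  obtain ⟨𝒰, hmin, hdisj, hV𝒰⟩ := hdim
  have h𝒰V : ∀ i, (𝒰 i \ V).Finite := fun i =>
    hV𝒰.diff_finite'.subset (sdiff_subset_sdiff_left (subset_iUnion 𝒰 i))
  choose γ hγ hW𝒰 using fun i =>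
    hvis (𝒰 i) (hmin i) (CCC.faceOf_of_diff_finite (hmin i).1 hV (h𝒰V i))
  have hWV : ∀ i, (X.WSet (γ i) \ V).Finite := fun i =>
    ((hW𝒰 i).diff_finite.union (h𝒰V i)).subset fun h ⟨hW, hnV⟩ =>
      (em (h ∈ 𝒰 i)).elim (fun h𝒰 => Or.inr ⟨h𝒰, hnV⟩) fun h𝒰 => Or.inl ⟨hW, h𝒰⟩
  have hWW : Pairwise fun i j => (X.WSet (γ i) ∩ X.WSet (γ j)).Finite := fun i j hij =>
    ((hW𝒰 i).diff_finite.union (hW𝒰 j).diff_finite).subset fun h ⟨hi, hj⟩ =>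
      (em (h ∈ 𝒰 i)).elim (fun h𝒰 => Or.inr ⟨hj, (hdisj i j hij).notMem_of_mem_left h𝒰⟩)
        fun h𝒰 => Or.inl ⟨hi, h𝒰⟩
  obtain ⟨M, hM⟩ := (CCC.eventually_raysCross_shift hX hV.2.2.1 hγ hWV hWW).exists
  exact CCC.RaysCross.exists_orthant (fun i => (hγ i).shift M) hM
end
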